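/- arXiv:2602.23779 — 2 statements merged into one kernel-verified Lean document; each statement's English description precedes it below -/
import Mathlib

section
/- Chevalley–Warning (C_1 property of finite fields): if F is a form (homogeneous polynomial) of degree d in n variables over a finite field with n > d, then F has a nontrivial zero. -/
/-- Chevalley–Warning (`C₁` property of finite fields): a form of degree `d > 0` in
`n > d` variables over a finite field has a nontrivial zero. -/
theorem chevalley_warning_C1 {k : Type*} [Field k] [Fintype k]
    {n d : ℕ} (hd : 0 < d) (hnd : d < n)
    (F : MvPolynomial (Fin n) k) (hF : F.IsHomogeneous d) :
    ∃ x : Fin n → k, x ≠ 0 ∧ MvPolynomial.eval x F = 0 := by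
  classical
  obtain ⟨p, hp⟩ := CharP.exists k
  haveI : Fact p.Prime := ⟨CharP.char_is_prime k p⟩
  have htd : F.totalDegree < Fintype.card (Fin n) := by
    simpa using lt_of_le_of_lt hF.totalDegree_le hnd
  have hdvd := char_dvd_card_solutions p htd
  have h0 : MvPolynomial.eval (0 : Fin n → k) F = 0 := by
    rw [MvPolynomial.eval_zero]
    have := hF.coeff_eq_zero (d := 0) (by simpa [map_zero] using hd.ne)
    simpa [MvPolynomial.constantCoeff_eq] using this
  by_contra h
  push_neg at h
  have huniq : ∀ s : { x : Fin n → k // MvPolynomial.eval x F = 0 },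
      s = ⟨0, h0⟩ := by
    rintro ⟨x, hx⟩
    by_contra hne
    exact (h x (fun hx0 => hne (by simpa using hx0)) ) hx
  have hcard : Fintype.card { x : Fin n → k // MvPolynomial.eval x F = 0 } = 1 :=
    Fintype.card_eq_one_iff.mpr ⟨⟨0, h0⟩, huniq⟩
  rw [hcard] at hdvd
  exact (Fact.out : p.Prime).one_lt.ne' (Nat.eq_one_of_dvd_one hdvd) |>.elim
end

section
/- A valued field (K, v) of characteristic p > 0 is dense in its perfect closure if and only if the subfield K^(p) of p-th powers is dense in K. -/
/-- A valued field `(K, v)` of characteristic `p > 0` is dense in its perfect closure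
(with respect to the unique extension `v'` of the valuation) if and only if the subfield
`K^(p)` of `p`-th powers is dense in `K`. -/
theorem dense_in_perfect_closure_iff_pth_powers_dense
    {K Γ₀ : Type*} [Field K] [LinearOrderedCommGroupWithZero Γ₀]
    [vK : Valued K Γ₀] (p : ℕ) [Fact p.Prime] [CharP K p]
    (v' : Valuation (PerfectClosure K p) Γ₀)
    (hv' : ∀ x : K, v' (PerfectClosure.of K p x) = Valued.v x) :
    (∀ x : PerfectClosure K p, ∀ γ : Γ₀ˣ,
        ∃ y : K, v' (x - PerfectClosure.of K p y) < γ) ↔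
    (∀ x : K, ∀ γ : Γ₀ˣ, ∃ y : K, Valued.v (x - y ^ p) < γ) := by
  have hp : p ≠ 0 := (Fact.out : p.Prime).ne_zero
  constructor
  · intro h x γ
    -- take a p-th root of `of x` in the perfect closure
    obtain ⟨z, hz⟩ := surjective_frobenius (PerfectClosure K p) p (PerfectClosure.of K p x)
    -- shrink γ to be ≤ 1
    set γ' : Γ₀ˣ := if γ ≤ 1 then γ else 1 with hγ'
    have hγ'le1 : (γ' : Γ₀) ≤ 1 := by
      by_cases hc : γ ≤ 1 <;> simp [hγ', hc]
      exact_mod_cast hc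
    have hγ'leγ : (γ' : Γ₀) ≤ γ := by
      by_cases hc : γ ≤ 1 <;> simp [hγ', hc]
      exact le_of_not_ge (by exact_mod_cast hc)
    obtain ⟨y, hy⟩ := h z γ'
    refine ⟨y, ?_⟩
    have key : PerfectClosure.of K p (x - y ^ p) =
        (z - PerfectClosure.of K p y) ^ p := by
      rw [sub_pow_char, map_sub, map_pow]
      congr 1
      rw [← hz, frobenius_def]
    have : Valued.v (x - y ^ p) = v' (z - PerfectClosure.of K p y) ^ p := by
      rw [← hv', key, map_pow]
    rw [this]
    calc v' (z - PerfectClosure.of K p y) ^ p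
        ≤ v' (z - PerfectClosure.of K p y) ^ 1 :=
          pow_le_pow_right_of_le_one' (le_of_lt (lt_of_lt_of_le hy hγ'le1))
            (Nat.one_le_iff_ne_zero.mpr hp)
      _ = v' (z - PerfectClosure.of K p y) := pow_one _
      _ < γ' := hy
      _ ≤ γ := hγ'leγ
  · intro h x γ
    obtain ⟨⟨n, a⟩, rfl⟩ := PerfectClosure.mk_surjective K p x
    induction n generalizing a γ with
    | zero =>
      exact ⟨a, by rw [← PerfectClosure.of_apply, sub_self, map_zero]; exact γ.zero_lt⟩
    | succ n ih =>
      -- (mk (n+1, a))^p = mk (n, a)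
      have hpow : PerfectClosure.mk K p (n + 1, a) ^ p = PerfectClosure.mk K p (n, a) := by
        rw [PerfectClosure.mk_pow, PerfectClosure.mk_succ_pow]
      obtain ⟨y, hy⟩ := ih (γ ^ p) a
      obtain ⟨z, hz⟩ := h y (γ ^ p)
      have hvz : v' (PerfectClosure.of K p (y - z ^ p)) < (γ : Γ₀) ^ p := by
        rw [hv']; exact_mod_cast hz
      have hsum : v' (PerfectClosure.mk K p (n + 1, a) ^ p
          - PerfectClosure.of K p (z ^ p)) < (γ : Γ₀) ^ p := by
        have : PerfectClosure.mk K p (n + 1, a) ^ p - PerfectClosure.of K p (z ^ p)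
            = (PerfectClosure.mk K p (n, a) - PerfectClosure.of K p y)
              + PerfectClosure.of K p (y - z ^ p) := by
          rw [hpow, map_sub]; ring
        rw [this]
        refine lt_of_le_of_lt (v'.map_add _ _) (max_lt ?_ hvz)
        exact_mod_cast hy
      refine ⟨z, ?_⟩
      have hfact : (PerfectClosure.mk K p (n + 1, a) - PerfectClosure.of K p z) ^ p
          = PerfectClosure.mk K p (n + 1, a) ^ p - PerfectClosure.of K p (z ^ p) := by
        rw [sub_pow_char, map_pow]
      by_contra hcon
      push_neg at hcon
      have : (γ : Γ₀) ^ p ≤ v' (PerfectClosure.mk K p (n + 1, a)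
          - PerfectClosure.of K p z) ^ p :=
        pow_le_pow_left' hcon p
      rw [← map_pow, hfact] at this
      exact absurd hsum (not_lt.mpr this)
end
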